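/- arXiv:2306.09950 — 6 statements merged into one kernel-verified Lean document; each statement's English description precedes it below -/
import Mathlib

section
/- Let G be a graph partitioned into clusters S_1, ..., S_k such that each S_i has outer conductance Φ_G(S_i) ≤ 1/2 and inner conductance Φ_{G[S_i]} ≥ Φ_in for every i, and suppose Δ(S_i)/δ(S_i) ≤ η_S for all i, where Δ(S_i), δ(S_i) are the maximum and minimum degrees (in G) of vertices of S_i. Then the sum over i of |S_i| * vol(S_i) is at most (18 * η_S / Φ_in) * OPT_G, where OPT_G is the minimum Dasgupta cost over all HC trees of G. -/
/-- A binary hierarchical-clustering tree with leaves labelled by vertices. -/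
inductive HCTree (V : Type*) where
  | leaf : V → HCTree V
  | node : HCTree V → HCTree V → HCTree V

namespace HCTree

variable {V : Type*}

def leavesList : HCTree V → List V
  | .leaf v => [v]
  | .node l r => l.leavesList ++ r.leavesList

variable [DecidableEq V]

def leaves : HCTree V → Finset V
  | .leaf v => {v}
  | .node l r => l.leaves ∪ r.leaves

/-- Number of leaves below the lowest common ancestor of `u` and `v`. -/
def lcaSize : HCTree V → V → V → ℕ
  | .leaf _, _, _ => 1
  | .node l r, u, v =>
    if u ∈ l.leaves ∧ v ∈ l.leaves then l.lcaSize u v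
    else if u ∈ r.leaves ∧ v ∈ r.leaves then r.lcaSize u v
    else (l.leaves ∪ r.leaves).card

end HCTree

open Finset

variable {V : Type*} [Fintype V] [DecidableEq V]

noncomputable def deg (w : V → V → ℝ) (u : V) : ℝ := ∑ v, w u v

noncomputable def volw (w : V → V → ℝ) (S : Finset V) : ℝ := ∑ u ∈ S, deg w u

noncomputable def cutw (w : V → V → ℝ) (S T : Finset V) : ℝ :=
  ∑ u ∈ S, ∑ v ∈ T, w u v

/-- `volIn w W A` is the volume of `A ⊆ W` in the induced subgraph `G[W]`. -/
noncomputable def volIn (w : V → V → ℝ) (W A : Finset V) : ℝ :=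
  ∑ u ∈ A, ∑ v ∈ W, w u v

/-- Dasgupta's cost of an HC tree (sum over ordered pairs, divided by two). -/
noncomputable def dasguptaCost (w : V → V → ℝ) (T : HCTree V) : ℝ :=
  (∑ u, ∑ v, w u v * (T.lcaSize u v : ℝ)) / 2

/-!
Fix a cluster `S` and an HC tree `T`, and weight each vertex by its degree in `G[S]`. Walking
down `T` from the root, always into the heavier child, we reach a subtree whose part `A` in `S`
has `vol_{G[S]}(A) ∈ (vol(G[S])/3, 2 vol(G[S])/3]`; the walk cannot get stuck at a leaf because,
without self-loops, a single vertex carries at most half of `vol(G[S])`. Every edge of `G[S]`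
between `A` and `S \ A` has its LCA at or above the node where the walk entered a subtree of
weight `≤ 2 vol(G[S])/3`, so more than `2 vol(G[S])/3 ≥ vol(S)/3` weight lies below the LCA;
as every degree in `S` is at most `η vol(S)/|S|`, the LCA has at least `|S|/(3η)` leaves.
Inner conductance gives `w(A, S \ A) ≥ Φ_in vol(G[S])/3`, so `T` pays at least
`|S| Φ_in vol(G[S])/(9η) ≥ |S| Φ_in vol(S)/(18η)` on the edges of `G[S]`, the last step by
`vol(S) ≤ 2 vol(G[S])`, which is the outer-conductance bound. Summing over the disjoint clusters
compares `∑ |S_i| vol(S_i)` with the cost of `T`.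
-/

namespace HCTree

variable {V : Type*} [DecidableEq V]

theorem mem_leaves_iff_mem_leavesList {t : HCTree V} {u : V} :
    u ∈ t.leaves ↔ u ∈ t.leavesList := by
  induction t with
  | leaf v => simp [leaves, leavesList]
  | node l r hl hr => simp [leaves, leavesList, hl, hr]

theorem disjoint_leaves_of_nodup {l r : HCTree V} (h : (node l r).leavesList.Nodup) :
    Disjoint l.leaves r.leaves := by
  rw [Finset.disjoint_left]
  intro a hl hr
  exact (List.nodup_append.mp h).2.2 a (mem_leaves_iff_mem_leavesList.mp hl) a
    (mem_leaves_iff_mem_leavesList.mp hr) rfl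

theorem lcaSize_comm (t : HCTree V) (u v : V) : t.lcaSize u v = t.lcaSize v u := by
  induction t with
  | leaf x => rfl
  | node l r hl hr =>
    simp only [lcaSize, hl, hr, and_comm (a := u ∈ l.leaves), and_comm (a := u ∈ r.leaves)]

theorem leaves_node_comm (l r : HCTree V) : (node l r).leaves = (node r l).leaves :=
  Finset.union_comm _ _

theorem lcaSize_node_comm {l r : HCTree V} (h : Disjoint l.leaves r.leaves) (u v : V) :
    (node l r).lcaSize u v = (node r l).lcaSize u v := by
  have hlr : ¬ ((u ∈ l.leaves ∧ v ∈ l.leaves) ∧ (u ∈ r.leaves ∧ v ∈ r.leaves)) :=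
    fun ⟨⟨hu, _⟩, ⟨hu', _⟩⟩ => Finset.disjoint_left.mp h hu hu'
  simp only [lcaSize, Finset.union_comm l.leaves]
  split_ifs <;> tauto

theorem lcaSize_node_of_mem_left {l r : HCTree V} {u v : V} (hu : u ∈ l.leaves)
    (hv : v ∈ l.leaves) : (node l r).lcaSize u v = l.lcaSize u v := by
  simp [lcaSize, hu, hv]

theorem lcaSize_node_of_mem_left_of_mem_right {l r : HCTree V} (h : Disjoint l.leaves r.leaves)
    {u v : V} (hu : u ∈ l.leaves) (hv : v ∈ r.leaves) :
    (node l r).lcaSize u v = (node l r).leaves.card := by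
  simp [lcaSize, leaves, Finset.disjoint_right.mp h hv, Finset.disjoint_left.mp h hu]

def IsBalancedSplit (t : HCTree V) (f : V → ℝ) (θ c : ℝ) (A : Finset V) : Prop :=
  A ⊆ t.leaves ∧ θ < 2 * ∑ x ∈ A, f x ∧ ∑ x ∈ A, f x ≤ θ ∧
    ∀ u ∈ A, ∀ v ∈ t.leaves \ A, c ≤ t.lcaSize u v

theorem isBalancedSplit_node_comm {l r : HCTree V} (h : Disjoint l.leaves r.leaves)
    {f : V → ℝ} {θ c : ℝ} {A : Finset V} (hA : (node r l).IsBalancedSplit f θ c A) :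
    (node l r).IsBalancedSplit f θ c A := by
  simpa only [IsBalancedSplit, leaves_node_comm l r, lcaSize_node_comm h] using hA

theorem lcaSize_node_ge_of_subset_left {l r : HCTree V} (h : Disjoint l.leaves r.leaves)
    {A : Finset V} {c : ℝ} (hA : A ⊆ l.leaves)
    (hsep : ∀ u ∈ A, ∀ v ∈ l.leaves \ A, c ≤ l.lcaSize u v)
    (hcard : c ≤ (node l r).leaves.card) :
    ∀ u ∈ A, ∀ v ∈ (node l r).leaves \ A, c ≤ (node l r).lcaSize u v := by
  intro u hu v hv
  obtain ⟨hv, hvA⟩ := Finset.mem_sdiff.mp hv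
  rcases Finset.mem_union.mp hv with hvl | hvr
  · rw [lcaSize_node_of_mem_left (hA hu) hvl]
    exact hsep u hu v (Finset.mem_sdiff.mpr ⟨hvl, hvA⟩)
  · rwa [lcaSize_node_of_mem_left_of_mem_right h (hA hu) hvr]

section BalancedSplit

variable {f : V → ℝ} {θ c : ℝ}

/-- If the heavier child is light, it is the split itself; otherwise the split of the heavier
child also works for the node. -/
theorem exists_isBalancedSplit_node {l r : HCTree V} (h : Disjoint l.leaves r.leaves)
    (hc : ∀ X : Finset V, θ < ∑ x ∈ X, f x → c ≤ X.card)
    (hrl : ∑ x ∈ r.leaves, f x ≤ ∑ x ∈ l.leaves, f x)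
    (ht : θ < ∑ x ∈ (node l r).leaves, f x)
    (ih : θ < ∑ x ∈ l.leaves, f x → ∃ A, l.IsBalancedSplit f θ c A) :
    ∃ A, (node l r).IsBalancedSplit f θ c A := by
  have hcard := hc _ ht
  have hsum :
      ∑ x ∈ (node l r).leaves, f x = ∑ x ∈ l.leaves, f x + ∑ x ∈ r.leaves, f x :=
    Finset.sum_union h
  by_cases hl : θ < ∑ x ∈ l.leaves, f x
  · obtain ⟨A, hA, hA₁, hA₂, hsep⟩ := ih hl
    exact ⟨A, hA.trans Finset.subset_union_left, hA₁, hA₂,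
      lcaSize_node_ge_of_subset_left h hA hsep hcard⟩
  · refine ⟨l.leaves, Finset.subset_union_left, by linarith, not_lt.mp hl,
      lcaSize_node_ge_of_subset_left h subset_rfl (by simp) hcard⟩

theorem exists_isBalancedSplit (hf : ∀ x, f x ≤ θ)
    (hc : ∀ X : Finset V, θ < ∑ x ∈ X, f x → c ≤ X.card) :
    ∀ t : HCTree V, t.leavesList.Nodup → θ < ∑ x ∈ t.leaves, f x →
      ∃ A, t.IsBalancedSplit f θ c A
  | leaf x, _, ht => absurd (hf x) (by simpa [leaves] using ht)
  | node l r, hnd, ht => by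
    have h := disjoint_leaves_of_nodup hnd
    have ihl := exists_isBalancedSplit hf hc l (List.nodup_append.mp hnd).1
    have ihr := exists_isBalancedSplit hf hc r (List.nodup_append.mp hnd).2.1
    rcases le_total (∑ x ∈ r.leaves, f x) (∑ x ∈ l.leaves, f x) with hrl | hlr
    · exact exists_isBalancedSplit_node h hc hrl ht ihl
    · obtain ⟨A, hA⟩ := exists_isBalancedSplit_node h.symm hc hlr
        (by rwa [leaves_node_comm]) ihr
      exact ⟨A, isBalancedSplit_node_comm h hA⟩

end BalancedSplit

end HCTree

section Graph

variable {V : Type*} {w : V → V → ℝ}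

theorem deg_pos_of_ne_zero [Fintype V] (hnonneg : ∀ u v, 0 ≤ w u v) {u v : V}
    (h : w u v ≠ 0) : 0 < deg w u :=
  (lt_of_le_of_ne (hnonneg u v) h.symm).trans_le
    (Finset.single_le_sum (fun x _ => hnonneg u x) (Finset.mem_univ v))

theorem volw_nonneg [Fintype V] (hnonneg : ∀ u v, 0 ≤ w u v) (S : Finset V) : 0 ≤ volw w S :=
  Finset.sum_nonneg fun u _ => Finset.sum_nonneg fun v _ => hnonneg u v

theorem volw_eq_volIn_add_cutw [Fintype V] [DecidableEq V] (S : Finset V) :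
    volw w S = volIn w S S + cutw w S Sᶜ := by
  rw [volw, volIn, cutw, ← Finset.sum_add_distrib]
  exact Finset.sum_congr rfl fun u _ => (Finset.sum_add_sum_compl S _).symm

theorem volw_le_two_mul_volIn [Fintype V] [DecidableEq V] {S : Finset V}
    (hout : cutw w S Sᶜ ≤ 1 / 2 * volw w S) : volw w S ≤ 2 * volIn w S S := by
  linarith [volw_eq_volIn_add_cutw (w := w) S]

theorem volIn_le_sum_deg [Fintype V] (hnonneg : ∀ u v, 0 ≤ w u v) (W A : Finset V) :
    volIn w W A ≤ ∑ u ∈ A, deg w u :=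
  Finset.sum_le_sum fun u _ =>
    Finset.sum_le_sum_of_subset_of_nonneg (Finset.subset_univ W) fun v _ _ => hnonneg u v

theorem volIn_add_volIn_sdiff [DecidableEq V] {W A : Finset V} (hA : A ⊆ W) :
    volIn w W A + volIn w W (W \ A) = volIn w W W := by
  rw [add_comm]
  exact Finset.sum_sdiff hA

/-- Each edge at `x` inside `S` is counted twice in `vol(G[S])`, once from either end. -/
theorem two_mul_volIn_singleton_le [DecidableEq V] (hsymm : ∀ u v, w u v = w v u)
    (hnonneg : ∀ u v, 0 ≤ w u v) (hself : ∀ u, w u u = 0) {S : Finset V} {x : V}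
    (hx : x ∈ S) : 2 * volIn w S {x} ≤ volIn w S S := by
  have hsplit := volIn_add_volIn_sdiff (w := w) (Finset.singleton_subset_iff.mpr hx)
  have hrest : volIn w S {x} ≤ volIn w S (S \ {x}) :=
    calc volIn w S {x} = ∑ u ∈ S \ {x}, w u x := by
          rw [volIn, Finset.sum_singleton,
            ← Finset.sum_sdiff (Finset.singleton_subset_iff.mpr hx), Finset.sum_singleton, hself,
            add_zero]
          exact Finset.sum_congr rfl fun u _ => hsymm x u
      _ ≤ volIn w S (S \ {x}) :=
          Finset.sum_le_sum fun u _ => Finset.single_le_sum (fun v _ => hnonneg u v) hx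
  linarith

theorem card_mul_deg_le [Fintype V] {S : Finset V} {η : ℝ}
    (hdeg : ∀ u ∈ S, ∀ v ∈ S, deg w u ≤ η * deg w v) {u : V} (hu : u ∈ S) :
    S.card * deg w u ≤ η * volw w S := by
  rw [volw, Finset.mul_sum, ← nsmul_eq_mul, ← Finset.sum_const]
  exact Finset.sum_le_sum fun v hv => hdeg u hu v hv

theorem mul_cutw_le_sum_mul (hnonneg : ∀ u v, 0 ≤ w u v) {A B : Finset V} {F : V → V → ℝ}
    {c : ℝ} (h : ∀ u ∈ A, ∀ v ∈ B, c ≤ F u v) :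
    c * cutw w A B ≤ ∑ u ∈ A, ∑ v ∈ B, w u v * F u v := by
  rw [cutw, Finset.mul_sum]
  refine Finset.sum_le_sum fun u hu => ?_
  rw [Finset.mul_sum]
  exact Finset.sum_le_sum fun v hv => by
    rw [mul_comm]; exact mul_le_mul_of_nonneg_left (h u hu v hv) (hnonneg u v)

theorem cutw_comm (hsymm : ∀ u v, w u v = w v u) (A B : Finset V) :
    cutw w A B = cutw w B A := by
  rw [cutw, cutw, Finset.sum_comm]
  exact Finset.sum_congr rfl fun u _ => Finset.sum_congr rfl fun v _ => hsymm v u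

theorem mul_min_volIn_le_cutw [DecidableEq V] (hsymm : ∀ u v, w u v = w v u) {S : Finset V}
    {Φ : ℝ} (hΦ : 0 ≤ Φ)
    (hin : ∀ A ⊆ S, volIn w S A ≤ volIn w S S / 2 → Φ * volIn w S A ≤ cutw w A (S \ A))
    {A : Finset V} (hA : A ⊆ S) :
    Φ * min (volIn w S A) (volIn w S (S \ A)) ≤ cutw w A (S \ A) := by
  have hsum := volIn_add_volIn_sdiff (w := w) hA
  by_cases hsmall : volIn w S A ≤ volIn w S S / 2
  · exact (mul_le_mul_of_nonneg_left (min_le_left _ _) hΦ).trans (hin A hA hsmall)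
  · have h := hin (S \ A) Finset.sdiff_subset (by linarith)
    rw [Finset.sdiff_sdiff_eq_self hA, ← cutw_comm hsymm] at h
    exact (mul_le_mul_of_nonneg_left (min_le_right _ _) hΦ).trans h

theorem two_mul_cutw_le_sum_mul_lcaSize [DecidableEq V] (hnonneg : ∀ u v, 0 ≤ w u v)
    (hsymm : ∀ u v, w u v = w v u) {S A : Finset V} (hA : A ⊆ S) {T : HCTree V} {c : ℝ}
    (hsep : ∀ u ∈ A, ∀ v ∈ S \ A, c ≤ T.lcaSize u v) :
    2 * (c * cutw w A (S \ A)) ≤ ∑ u ∈ S, ∑ v ∈ S, w u v * T.lcaSize u v := by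
  have hinner : ∀ B ⊆ S, ∀ u,
      ∑ v ∈ B, w u v * T.lcaSize u v ≤ ∑ v ∈ S, w u v * T.lcaSize u v :=
    fun B hB u => Finset.sum_le_sum_of_subset_of_nonneg hB fun v _ _ =>
      mul_nonneg (hnonneg u v) (Nat.cast_nonneg _)
  have hA' := mul_cutw_le_sum_mul hnonneg hsep
  have hSA := mul_cutw_le_sum_mul (w := w) (F := fun u v => (T.lcaSize u v : ℝ)) hnonneg
    fun u hu v hv => (T.lcaSize_comm u v).symm ▸ hsep v hv u hu
  rw [cutw_comm hsymm] at hSA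
  calc 2 * (c * cutw w A (S \ A))
      ≤ ∑ u ∈ A, ∑ v ∈ S \ A, w u v * T.lcaSize u v +
          ∑ u ∈ S \ A, ∑ v ∈ A, w u v * T.lcaSize u v := by
        linarith
    _ ≤ ∑ u ∈ A, ∑ v ∈ S, w u v * T.lcaSize u v +
          ∑ u ∈ S \ A, ∑ v ∈ S, w u v * T.lcaSize u v :=
        add_le_add (Finset.sum_le_sum fun u _ => hinner _ Finset.sdiff_subset u)
          (Finset.sum_le_sum fun u _ => hinner _ hA u)
    _ = ∑ u ∈ S, ∑ v ∈ S, w u v * T.lcaSize u v := by rw [add_comm, Finset.sum_sdiff hA]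

end Graph

section Clusters

variable {V : Type*} [Fintype V] [DecidableEq V] {w : V → V → ℝ}

theorem sum_sum_blocks_le_sum_sum {ι : Type*} [Fintype ι] {S : ι → Finset V}
    (hdisj : ∀ i j, i ≠ j → Disjoint (S i) (S j)) (hcover : ∀ v, ∃ i, v ∈ S i)
    {F : V → V → ℝ} (hF : ∀ u v, 0 ≤ F u v) :
    ∑ i, ∑ u ∈ S i, ∑ v ∈ S i, F u v ≤ ∑ u, ∑ v, F u v := by
  have hunion : Finset.univ.biUnion S = Finset.univ :=
    Finset.eq_univ_of_forall fun v => by simpa using hcover v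
  calc ∑ i, ∑ u ∈ S i, ∑ v ∈ S i, F u v ≤ ∑ i, ∑ u ∈ S i, ∑ v, F u v :=
        Finset.sum_le_sum fun i _ => Finset.sum_le_sum fun u _ =>
          Finset.sum_le_sum_of_subset_of_nonneg (Finset.subset_univ _) fun v _ _ => hF u v
    _ = ∑ u, ∑ v, F u v := by
        rw [← Finset.sum_biUnion fun i _ j _ hij => hdisj i j hij, hunion]

theorem card_div_le_card_of_volIn_gt (hnonneg : ∀ u v, 0 ≤ w u v) {S : Finset V} {η : ℝ}
    (hη : 0 < η) (hdeg : ∀ u ∈ S, ∀ v ∈ S, deg w u ≤ η * deg w v) (hvol : 0 < volw w S)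
    (hvolM : volw w S ≤ 2 * volIn w S S) {X : Finset V}
    (hX : 2 / 3 * volIn w S S < volIn w S (X ∩ S)) :
    S.card / (3 * η) ≤ X.card := by
  have hXS : S.card * volIn w S (X ∩ S) ≤ (X ∩ S).card * (η * volw w S) :=
    calc S.card * volIn w S (X ∩ S) ≤ S.card * ∑ u ∈ X ∩ S, deg w u :=
          mul_le_mul_of_nonneg_left (volIn_le_sum_deg hnonneg S _) (Nat.cast_nonneg _)
      _ ≤ ∑ u ∈ X ∩ S, η * volw w S := by
          rw [Finset.mul_sum]
          exact Finset.sum_le_sum fun u hu => card_mul_deg_le hdeg (Finset.mem_inter.mp hu).2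
      _ = (X ∩ S).card * (η * volw w S) := by rw [Finset.sum_const, nsmul_eq_mul]
  have hcard : ((X ∩ S).card : ℝ) ≤ X.card :=
    Nat.cast_le.mpr (Finset.card_le_card Finset.inter_subset_left)
  rw [div_le_iff₀ (by positivity)]
  refine le_of_mul_le_mul_right ?_ hvol
  nlinarith [mul_le_mul_of_nonneg_right hcard (by positivity : 0 ≤ η * volw w S)]

theorem exists_balanced_subset_lcaSize_ge (hsymm : ∀ u v, w u v = w v u)
    (hnonneg : ∀ u v, 0 ≤ w u v) (hself : ∀ u, w u u = 0) {S : Finset V} {η : ℝ}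
    (hη : 0 < η) (hdeg : ∀ u ∈ S, ∀ v ∈ S, deg w u ≤ η * deg w v) (hvol : 0 < volw w S)
    (hvolM : volw w S ≤ 2 * volIn w S S) {T : HCTree V} (hleaves : T.leaves = Finset.univ)
    (hnodup : T.leavesList.Nodup) :
    ∃ B ⊆ S, volIn w S S < 3 * volIn w S B ∧ 3 * volIn w S B ≤ 2 * volIn w S S ∧
      ∀ u ∈ B, ∀ v ∈ S \ B, S.card / (3 * η) ≤ T.lcaSize u v := by
  set f : V → ℝ := fun x => if x ∈ S then ∑ v ∈ S, w x v else 0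
  have hmass : ∀ X, ∑ x ∈ X, f x = volIn w S (X ∩ S) := fun X => Finset.sum_ite_mem X S _
  have hf : ∀ x, f x ≤ 2 / 3 * volIn w S S := by
    intro x
    by_cases hx : x ∈ S
    · have := two_mul_volIn_singleton_le hsymm hnonneg hself hx
      simp only [f, hx, if_true]
      rw [volIn, Finset.sum_singleton] at this
      linarith
    · simp only [f, hx, if_false]
      linarith
  obtain ⟨A, -, hA₁, hA₂, hsep⟩ := T.exists_isBalancedSplit hf
    (fun X hX => card_div_le_card_of_volIn_gt hnonneg hη hdeg hvol hvolM (hmass X ▸ hX))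
    hnodup (by rw [hmass, hleaves, Finset.univ_inter]; linarith)
  rw [hmass] at hA₁ hA₂
  refine ⟨A ∩ S, Finset.inter_subset_right, by linarith, by linarith, fun u hu v hv => ?_⟩
  obtain ⟨hvS, hvA⟩ := Finset.mem_sdiff.mp hv
  refine hsep u (Finset.mem_inter.mp hu).1 v
    (Finset.mem_sdiff.mpr ⟨hleaves ▸ Finset.mem_univ v, fun hvA' => ?_⟩)
  exact hvA (Finset.mem_inter.mpr ⟨hvA', hvS⟩)

theorem card_mul_volw_le_sum_lcaSize (hsymm : ∀ u v, w u v = w v u)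
    (hnonneg : ∀ u v, 0 ≤ w u v) (hself : ∀ u, w u u = 0) {S : Finset V} {η Φ : ℝ}
    (hη : 0 < η) (hΦ : 0 < Φ) (hout : cutw w S Sᶜ ≤ 1 / 2 * volw w S)
    (hin : ∀ A ⊆ S, volIn w S A ≤ volIn w S S / 2 → Φ * volIn w S A ≤ cutw w A (S \ A))
    (hdeg : ∀ u ∈ S, ∀ v ∈ S, deg w u ≤ η * deg w v) {T : HCTree V}
    (hleaves : T.leaves = Finset.univ) (hnodup : T.leavesList.Nodup) :
    S.card * volw w S ≤
      18 * η / Φ * ((∑ u ∈ S, ∑ v ∈ S, w u v * T.lcaSize u v) / 2) := by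
  set M := volIn w S S
  have hvolM := volw_le_two_mul_volIn hout
  have hcost_nonneg : 0 ≤ ∑ u ∈ S, ∑ v ∈ S, w u v * T.lcaSize u v :=
    Finset.sum_nonneg fun u _ => Finset.sum_nonneg fun v _ =>
      mul_nonneg (hnonneg u v) (Nat.cast_nonneg _)
  rcases (volw_nonneg hnonneg S).eq_or_lt with hvol | hvol
  · rw [← hvol, mul_zero]
    positivity
  obtain ⟨B, hB, hB₁, hB₂, hsep⟩ :=
    exists_balanced_subset_lcaSize_ge hsymm hnonneg hself hη hdeg hvol hvolM hleaves hnodup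
  have hsplit := volIn_add_volIn_sdiff (w := w) hB
  have hcut : Φ * (M / 3) ≤ cutw w B (S \ B) :=
    (mul_le_mul_of_nonneg_left (le_min (by linarith) (by linarith)) hΦ.le).trans
      (mul_min_volIn_le_cutw hsymm hΦ.le hin hB)
  have hcost := two_mul_cutw_le_sum_mul_lcaSize hnonneg hsymm hB hsep
  have hconst : 18 * η / Φ * (S.card / (3 * η) * (Φ * (M / 3))) = S.card * (2 * M) := by
    field_simp
    ring
  calc (S.card : ℝ) * volw w S ≤ 18 * η / Φ * (S.card / (3 * η) * (Φ * (M / 3))) := by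
        rw [hconst]; gcongr
    _ ≤ 18 * η / Φ * (S.card / (3 * η) * cutw w B (S \ B)) := by gcongr
    _ ≤ 18 * η / Φ * ((∑ u ∈ S, ∑ v ∈ S, w u v * T.lcaSize u v) / 2) := by
        gcongr
        linarith

end Clusters

theorem sum_card_mul_vol_le_opt_general
    (w : V → V → ℝ)
    (hsymm : ∀ u v, w u v = w v u)
    (hnonneg : ∀ u v, 0 ≤ w u v)
    (hself : ∀ u, w u u = 0)
    (k : ℕ)
    (S : Fin k → Finset V)
    (hdisj : ∀ i j, i ≠ j → Disjoint (S i) (S j))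
    (hcover : ∀ v : V, ∃ i, v ∈ S i)
    (ηS Φin : ℝ) (hΦin : 0 < Φin)
    -- outer conductance at most 1/2
    (hout : ∀ i, cutw w (S i) (S i)ᶜ ≤ (1 / 2) * volw w (S i))
    -- inner conductance of every induced subgraph G[S i] at least Φin
    (hin : ∀ i, ∀ A ⊆ S i,
      volIn w (S i) A ≤ volIn w (S i) (S i) / 2 →
      Φin * volIn w (S i) A ≤ cutw w A (S i \ A))
    -- max degree over min degree within each cluster bounded by ηS
    (hdeg : ∀ i, ∀ u ∈ S i, ∀ v ∈ S i, deg w u ≤ ηS * deg w v)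
    (T : HCTree V)
    (hleaves : T.leaves = Finset.univ)
    (hnodup : T.leavesList.Nodup) :
    ∑ i, ((S i).card : ℝ) * volw w (S i)
      ≤ 18 * ηS / Φin * dasguptaCost w T := by
  by_cases hw : ∀ u v, w u v = 0
  · simp [volw, deg, dasguptaCost, hw]
  obtain ⟨u, v, huv⟩ : ∃ u v, w u v ≠ 0 := by simpa using hw
  obtain ⟨i, hi⟩ := hcover u
  have hη : 0 < ηS := zero_lt_one.trans_le <|
    (le_mul_iff_one_le_left (deg_pos_of_ne_zero hnonneg huv)).mp (hdeg i u hi u hi)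
  calc ∑ i, ((S i).card : ℝ) * volw w (S i)
      ≤ ∑ i, 18 * ηS / Φin * ((∑ u ∈ S i, ∑ v ∈ S i, w u v * T.lcaSize u v) / 2) :=
        Finset.sum_le_sum fun i _ => card_mul_volw_le_sum_lcaSize hsymm hnonneg hself hη hΦin
          (hout i) (hin i) (hdeg i) hleaves hnodup
    _ = 18 * ηS / Φin * ((∑ i, ∑ u ∈ S i, ∑ v ∈ S i, w u v * T.lcaSize u v) / 2) := by
        rw [← Finset.mul_sum, ← Finset.sum_div]
    _ ≤ 18 * ηS / Φin * dasguptaCost w T := by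
        rw [dasguptaCost]
        gcongr
        exact sum_sum_blocks_le_sum_sum hdisj hcover fun u v =>
          mul_nonneg (hnonneg u v) (Nat.cast_nonneg _)

/-- If `G` is partitioned into clusters `S_1, ..., S_k`, each with
outer conductance `Φ_G(S_i) ≤ 1/2`, inner conductance `Φ_{G[S_i]} ≥ Φ_in`, and
degree ratio `Δ(S_i)/δ(S_i) ≤ η_S`, then
`∑ i |S_i| * vol(S_i) ≤ (18 η_S / Φ_in) * OPT_G`.  (`OPT_G` being the minimum
Dasgupta cost, this is expressed by bounding against the cost of an arbitrary
HC tree `T` of `G`.) -/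
theorem sum_card_mul_vol_le_opt
    (w : V → V → ℝ)
    (hsymm : ∀ u v, w u v = w v u)
    (hnonneg : ∀ u v, 0 ≤ w u v)
    (hself : ∀ u, w u u = 0)
    (k : ℕ) (hk : 0 < k)
    (S : Fin k → Finset V)
    (hdisj : ∀ i j, i ≠ j → Disjoint (S i) (S j))
    (hcover : ∀ v : V, ∃ i, v ∈ S i)
    (ηS Φin : ℝ) (hΦin : 0 < Φin)
    -- outer conductance at most 1/2
    (hout : ∀ i, cutw w (S i) (S i)ᶜ ≤ (1 / 2) * volw w (S i))
    -- inner conductance of every induced subgraph G[S i] at least Φin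
    (hin : ∀ i, ∀ A ⊆ S i,
      volIn w (S i) A ≤ volIn w (S i) (S i) / 2 →
      Φin * volIn w (S i) A ≤ cutw w A (S i \ A))
    -- max degree over min degree within each cluster bounded by ηS
    (hdeg : ∀ i, ∀ u ∈ S i, ∀ v ∈ S i, deg w u ≤ ηS * deg w v)
    (T : HCTree V)
    (hleaves : T.leaves = Finset.univ)
    (hnodup : T.leavesList.Nodup) :
    ∑ i, ((S i).card : ℝ) * volw w (S i)
      ≤ 18 * ηS / Φin * dasguptaCost w T :=
  sum_card_mul_vol_le_opt_general w hsymm hnonneg hself k S hdisj hcover ηS Φin hΦin hout hin hdeg T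
    hleaves hnodup
end

section
/- Let P be a cluster of vertices, S its corresponding optimal cluster, and suppose vol(P △ S) ≤ ε * vol(S) for some ε < 1/2, where △ denotes symmetric difference. Let u_min be a vertex in P ∩ S of minimum degree and suppose all degrees in S lie within a factor η of each other, so P ∩ S ⊆ B(u_min) = {v ∈ P : d_{u_min} ≤ d_v < η d_{u_min}}. If u* = argmax_{u ∈ P} vol(B(u)), then vol(B(u*) ∩ S) ≥ (1 - 2ε) * vol(S). In particular, if ε < 1/4 then B(u*) is the unique bucket with vol(B ∩ S) > vol(S)/2. -/
open Finset
open scoped Classical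

/-- The volume of a vertex set: the sum of the degrees of its vertices. -/
noncomputable def volsum {V : Type*} (d : V → ℝ) (A : Finset V) : ℝ :=
  ∑ v ∈ A, d v

/-- The bucket of `u ∈ P`: all `v ∈ P` with `d_u ≤ d_v < η d_u`. -/
noncomputable def bkt {V : Type*} (P : Finset V) (d : V → ℝ) (η : ℝ)
    (u : V) : Finset V :=
  P.filter (fun v => d u ≤ d v ∧ d v < η * d u)

lemma volsum_mono {V : Type*} [DecidableEq V] (d : V → ℝ) (hd : ∀ v, 0 ≤ d v)
    {A B : Finset V} (h : A ⊆ B) : volsum d A ≤ volsum d B :=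
  Finset.sum_le_sum_of_subset_of_nonneg h (fun v _ _ => hd v)

lemma volsum_split {V : Type*} [DecidableEq V] (d : V → ℝ) (A S : Finset V) :
    volsum d A = volsum d (A ∩ S) + volsum d (A \ S) := by
  rw [volsum, volsum, volsum, Finset.sum_inter_add_sum_sdiff]

/-- If `vol(P △ S) ≤ ε vol(S)` with `ε < 1/2`, all degrees in `S`
are within factor `η`, `u_min` is a minimum-degree vertex of `P ∩ S` (so
`P ∩ S ⊆ B(u_min)`), and `u*` maximises `vol(B(u))` over `u ∈ P`, then
`vol(B(u*) ∩ S) ≥ (1 - 2ε) vol(S)`.  In particular if `ε < 1/4` then `B(u*)` is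
the unique bucket with `vol(B ∩ S) > vol(S)/2`. -/
theorem heavy_bucket_overlap
    {V : Type*} [DecidableEq V]
    (P S : Finset V) (d : V → ℝ)
    (hd : ∀ v, 0 ≤ d v)
    (η ε : ℝ) (hε0 : 0 ≤ ε) (hε : ε < 1 / 2)
    (hvolS : 0 < volsum d S)
    (hS : ∀ u ∈ S, ∀ v ∈ S, d u ≤ η * d v)
    (umin : V) (humin : umin ∈ P ∩ S)
    (hmin : ∀ v ∈ P ∩ S, d umin ≤ d v)
    (hsubset : P ∩ S ⊆ bkt P d η umin)
    (hsym : volsum d ((P \ S) ∪ (S \ P)) ≤ ε * volsum d S)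
    (ustar : V) (hustar : ustar ∈ P)
    (hmax : ∀ u ∈ P, volsum d (bkt P d η u) ≤ volsum d (bkt P d η ustar)) :
    (1 - 2 * ε) * volsum d S ≤ volsum d (bkt P d η ustar ∩ S)
    ∧ (ε < 1 / 4 →
        volsum d S / 2 < volsum d (bkt P d η ustar ∩ S)
        ∧ ∀ B' : Finset V, Disjoint B' (bkt P d η ustar) →
            volsum d (B' ∩ S) ≤ volsum d S / 2) := by
  set B := bkt P d η ustar with hB
  have hSP : volsum d (S \ P) ≤ ε * volsum d S :=
    le_trans (volsum_mono d hd (Finset.subset_union_right)) hsym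
  have hPS : volsum d (P \ S) ≤ ε * volsum d S :=
    le_trans (volsum_mono d hd (Finset.subset_union_left)) hsym
  -- vol(P ∩ S) ≥ (1-ε) vol S
  have hsplitS : volsum d S = volsum d (S ∩ P) + volsum d (S \ P) :=
    volsum_split d S P
  have hPinterS : (1 - ε) * volsum d S ≤ volsum d (P ∩ S) := by
    rw [Finset.inter_comm]
    nlinarith
  -- vol(B) ≥ vol(P ∩ S)
  have huminP : umin ∈ P := (Finset.mem_inter.mp humin).1
  have hBbig : volsum d (P ∩ S) ≤ volsum d B :=
    le_trans (volsum_mono d hd hsubset) (hmax umin huminP)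
  -- split B
  have hsplitB : volsum d B = volsum d (B ∩ S) + volsum d (B \ S) :=
    volsum_split d B S
  have hBdiff : volsum d (B \ S) ≤ ε * volsum d S := by
    refine le_trans (volsum_mono d hd ?_) hPS
    intro v hv
    rw [Finset.mem_sdiff] at hv ⊢
    exact ⟨Finset.mem_filter.mp hv.1 |>.1, hv.2⟩
  have hmain : (1 - 2 * ε) * volsum d S ≤ volsum d (B ∩ S) := by nlinarith
  refine ⟨hmain, fun hε4 => ?_⟩
  have hhalf : volsum d S / 2 < volsum d (B ∩ S) := by nlinarith
  refine ⟨hhalf, fun B' hdisj => ?_⟩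
  have hdisj' : Disjoint (B' ∩ S) (B ∩ S) :=
    (hdisj.mono (Finset.inter_subset_left) (Finset.inter_subset_left))
  have hsum : volsum d (B' ∩ S) + volsum d (B ∩ S) ≤ volsum d S := by
    rw [volsum, volsum, ← Finset.sum_union hdisj']
    exact volsum_mono d hd (Finset.union_subset (Finset.inter_subset_right)
      (Finset.inter_subset_right))
  linarith
end

section
/- Let B be a 'heavy bucket' inside cluster P with corresponding optimal cluster S, satisfying vol(B ∩ S) ≥ (1 - 2ε/3) * vol(S) with vol(P △ S) ≤ (ε/3) * vol(S), where ε is small (ε/3 + 2 < 3/ε is assumed, e.g. ε ≤ 1). Suppose additionally all degrees within bucket B lie within a factor η of each other and all degrees within S lie within factor η of each other. Then |B| ≤ (1 + η) * |S|. -/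
open Finset

/-- Let `B ⊆ P` be a heavy bucket for the cluster `S`, i.e.
`vol(B ∩ S) ≥ (1 - 2ε/3) vol(S)` and `vol(P △ S) ≤ (ε/3) vol(S)`, with `ε`
small (`ε ≤ 1`), and suppose the degrees within `B` and within `S` each lie
within a factor `η` of each other.  Then `|B| ≤ (1 + η) |S|`. -/
theorem heavy_bucket_card_le
    {V : Type*} [DecidableEq V]
    (P S B : Finset V) (d : V → ℝ)
    (hd : ∀ v, 0 < d v)
    (η ε : ℝ) (hη : 1 ≤ η) (hε0 : 0 < ε) (hε1 : ε ≤ 1)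
    (hBP : B ⊆ P)
    (hheavy : (1 - 2 * ε / 3) * volsum d S ≤ volsum d (B ∩ S))
    (hsym : volsum d ((P \ S) ∪ (S \ P)) ≤ ε / 3 * volsum d S)
    (hB : ∀ u ∈ B, ∀ v ∈ B, d u ≤ η * d v)
    (hS : ∀ u ∈ S, ∀ v ∈ S, d u ≤ η * d v) :
    (B.card : ℝ) ≤ (1 + η) * (S.card : ℝ) := by
  classical
  have hη0 : (0:ℝ) < η := lt_of_lt_of_le one_pos hη
  have hvol_nonneg : ∀ A : Finset V, 0 ≤ volsum d A := fun A =>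
    Finset.sum_nonneg fun v _ => (hd v).le
  have hmono : ∀ {A C : Finset V}, A ⊆ C → volsum d A ≤ volsum d C := fun h =>
    Finset.sum_le_sum_of_subset_of_nonneg h (fun v _ _ => (hd v).le)
  by_contra hcon
  push_neg at hcon
  rcases (B ∩ S).eq_empty_or_nonempty with hBS | hBS
  · -- then S is empty, P is empty, B is empty, contradiction
    have h0 : volsum d (B ∩ S) = 0 := by simp [hBS, volsum]
    have hSvol : volsum d S ≤ 0 := by nlinarith [hvol_nonneg S]
    have hSempty : S = ∅ := by
      by_contra hne
      obtain ⟨v, hv⟩ := Finset.nonempty_iff_ne_empty.mpr hne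
      have : 0 < volsum d S :=
        Finset.sum_pos' (fun u _ => (hd u).le) ⟨v, hv, hd v⟩
      linarith
    have hPvol : volsum d P ≤ 0 := by
      have := hsym
      simp [hSempty] at this
      calc volsum d P ≤ volsum d ((P \ ∅) ∪ (∅ \ P)) := by simp
        _ ≤ ε / 3 * volsum d ∅ := by simpa [hSempty] using hsym
        _ = 0 := by simp [volsum]
    have hPempty : P = ∅ := by
      by_contra hne
      obtain ⟨v, hv⟩ := Finset.nonempty_iff_ne_empty.mpr hne
      have : 0 < volsum d P :=
        Finset.sum_pos' (fun u _ => (hd u).le) ⟨v, hv, hd v⟩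
      linarith
    have hBempty : B = ∅ := Finset.subset_empty.mp (hPempty ▸ hBP)
    rw [hBempty, hSempty] at hcon
    simp at hcon
  · obtain ⟨v₁, hv₁, hv₁max⟩ := Finset.exists_max_image (B ∩ S) d hBS
    have hv₁B : v₁ ∈ B := Finset.mem_of_mem_inter_left hv₁
    have hdv₁ : 0 < d v₁ := hd v₁
    -- cardinality facts
    have hcard_split : ((B ∩ S).card : ℝ) + ((B \ S).card : ℝ) = (B.card : ℝ) := by
      rw [← Nat.cast_add]
      norm_cast
      exact Finset.card_inter_add_card_sdiff B S
    have hcard_le : ((B ∩ S).card : ℝ) ≤ (S.card : ℝ) := by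
      exact_mod_cast Finset.card_le_card (Finset.inter_subset_right)
    have hbig : η * ((B ∩ S).card : ℝ) < ((B \ S).card : ℝ) := by nlinarith
    -- upper bound vol(B ∩ S) ≤ |B∩S| * d v₁
    have hub : volsum d (B ∩ S) ≤ ((B ∩ S).card : ℝ) * d v₁ := by
      have := Finset.sum_le_card_nsmul (B ∩ S) d (d v₁) (fun x hx => hv₁max x hx)
      simpa [volsum, nsmul_eq_mul] using this
    -- lower bound vol(B \ S) ≥ |B\S| * (d v₁ / η)
    have hlb : ((B \ S).card : ℝ) * (d v₁ / η) ≤ volsum d (B \ S) := by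
      have := Finset.card_nsmul_le_sum (B \ S) d (d v₁ / η)
        (fun x hx => by
          have hxB : x ∈ B := (Finset.mem_sdiff.mp hx).1
          have := hB v₁ hv₁B x hxB
          rw [div_le_iff₀ hη0]
          linarith)
      simpa [volsum, nsmul_eq_mul] using this
    -- vol(B\S) ≤ ε/3 vol S
    have hsub : B \ S ⊆ (P \ S) ∪ (S \ P) := by
      intro x hx
      rw [Finset.mem_sdiff] at hx
      exact Finset.mem_union_left _ (Finset.mem_sdiff.mpr ⟨hBP hx.1, hx.2⟩)
    have hup : volsum d (B \ S) ≤ ε / 3 * volsum d S := le_trans (hmono hsub) hsym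
    -- vol S > 0
    have hBSle : volsum d (B ∩ S) ≤ volsum d S := hmono Finset.inter_subset_right
    have hBSpos : 0 < volsum d (B ∩ S) := by
      obtain ⟨v, hv⟩ := hBS
      exact Finset.sum_pos' (fun u _ => (hd u).le) ⟨v, hv, hd v⟩
    have hSpos : 0 < volsum d S := lt_of_lt_of_le hBSpos hBSle
    -- combine
    have hchain : ((B ∩ S).card : ℝ) * d v₁ < volsum d (B \ S) := by
      calc ((B ∩ S).card : ℝ) * d v₁
          = (η * ((B ∩ S).card : ℝ)) * (d v₁ / η) := by field_simp
        _ < ((B \ S).card : ℝ) * (d v₁ / η) := by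
            apply mul_lt_mul_of_pos_right hbig (div_pos hdv₁ hη0)
        _ ≤ volsum d (B \ S) := hlb
    have hfin : (1 - 2 * ε / 3) * volsum d S < ε / 3 * volsum d S := by
      calc (1 - 2 * ε / 3) * volsum d S ≤ volsum d (B ∩ S) := hheavy
        _ ≤ ((B ∩ S).card : ℝ) * d v₁ := hub
        _ < volsum d (B \ S) := hchain
        _ ≤ ε / 3 * volsum d S := hup
    nlinarith
end

section
/- Let B_1, ..., B_m be disjoint finite vertex sets with degree function d, and let S_1, ..., S_k be disjoint sets covering them. Suppose (i) for each bucket B_t and clusters S_i, S_j with |B_t ∩ S_j| ≤ |B_t ∩ S_i|, we have vol(B_t ∩ S_j) ≤ η * vol(B_t ∩ S_i), and (ii) vol(B_t ∩ S_i) ≤ c * vol(S_i) for all t, i, for constants η ≥ 1, c > 0. Then sum_t |B_t| * vol(B_t) ≤ 2kηc * sum_i |S_i| * vol(S_i). -/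
/-!
Expand `|B_t| vol(B_t) = ∑_{i,j} |B_t ∩ S_i| vol(B_t ∩ S_j)`. Each cross term is at most
`η (|B_t ∩ S_i| vol(B_t ∩ S_i) + |B_t ∩ S_j| vol(B_t ∩ S_j))`: compare the cardinalities and
bound whichever factor belongs to the smaller piece by hypothesis (i). Summing over the `k` choices
of the other index leaves `2kη ∑_i |B_t ∩ S_i| vol(B_t ∩ S_i)`; finally hypothesis (ii) and
`∑_t |B_t ∩ S_i| ≤ |S_i|` bound the sum over `t` of the `i`-th term by `c |S_i| vol(S_i)`.
-/

open Finset Function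

section Decomposition

variable {ι V : Type*} [Fintype ι] [DecidableEq V]

theorem sum_eq_sum_sum_inter {M : Type*} [AddCommMonoid M] {S : ι → Finset V}
    (hS : Pairwise (Disjoint on S)) {A : Finset V} (hA : ∀ v ∈ A, ∃ i, v ∈ S i) (f : V → M) :
    ∑ v ∈ A, f v = ∑ i, ∑ v ∈ A ∩ S i, f v := by
  have hA' : A = univ.biUnion fun i => A ∩ S i := by
    rw [← inter_biUnion, eq_comm, inter_eq_left]
    intro v hv
    simpa using hA v hv
  conv_lhs => rw [hA']
  exact sum_biUnion fun i _ j _ hij => (hS hij).mono inter_subset_right inter_subset_right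

theorem card_eq_sum_card_inter {S : ι → Finset V} (hS : Pairwise (Disjoint on S))
    {A : Finset V} (hA : ∀ v ∈ A, ∃ i, v ∈ S i) : #A = ∑ i, #(A ∩ S i) := by
  simp only [card_eq_sum_ones]
  exact sum_eq_sum_sum_inter hS hA _

theorem volsum_eq_sum_volsum_inter {S : ι → Finset V} (hS : Pairwise (Disjoint on S))
    {A : Finset V} (hA : ∀ v ∈ A, ∃ i, v ∈ S i) (d : V → ℝ) :
    volsum d A = ∑ i, volsum d (A ∩ S i) :=
  sum_eq_sum_sum_inter hS hA d

theorem sum_card_inter_le_card {B : ι → Finset V} (hB : Pairwise (Disjoint on B))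
    (s : Finset V) : ∑ t, #(B t ∩ s) ≤ #s := by
  rw [← card_biUnion fun t _ t' _ h => (hB h).mono inter_subset_left inter_subset_left]
  exact card_le_card (biUnion_subset.2 fun t _ => inter_subset_right)

end Decomposition

theorem volsum_nonneg {V : Type*} {d : V → ℝ} (hd : ∀ v, 0 ≤ d v) (A : Finset V) :
    0 ≤ volsum d A :=
  sum_nonneg fun v _ => hd v

theorem sum_card_inter_mul_volsum_inter_le {ι V : Type*} [Fintype ι] [DecidableEq V]
    {d : V → ℝ} (hd : ∀ v, 0 ≤ d v) {B : ι → Finset V} (hB : Pairwise (Disjoint on B))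
    {s : Finset V} {c : ℝ} (hc : 0 ≤ c) (h : ∀ t, volsum d (B t ∩ s) ≤ c * volsum d s) :
    ∑ t, (#(B t ∩ s) : ℝ) * volsum d (B t ∩ s) ≤ c * (#s * volsum d s) := by
  have hcs : 0 ≤ c * volsum d s := mul_nonneg hc (volsum_nonneg hd s)
  calc ∑ t, (#(B t ∩ s) : ℝ) * volsum d (B t ∩ s)
      ≤ ∑ t, (#(B t ∩ s) : ℝ) * (c * volsum d s) := by gcongr with t; exact h t
    _ = ((∑ t, #(B t ∩ s) : ℕ) : ℝ) * (c * volsum d s) := by rw [← sum_mul, Nat.cast_sum]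
    _ ≤ #s * (c * volsum d s) := by gcongr; exact sum_card_inter_le_card hB s
    _ = c * (#s * volsum d s) := by ring

theorem mul_le_mul_add_mul_of_le_imp {a a' v v' η : ℝ} (ha : 0 ≤ a) (ha' : 0 ≤ a')
    (hv : 0 ≤ v) (hv' : 0 ≤ v') (hη : 1 ≤ η) (h : a' ≤ a → v' ≤ η * v) :
    a * v' ≤ η * (a * v + a' * v') := by
  have hav := mul_nonneg ha hv
  have hav' := mul_nonneg ha' hv'
  rcases le_total a' a with ha'a | haa'
  · calc a * v' ≤ a * (η * v) := mul_le_mul_of_nonneg_left (h ha'a) ha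
      _ ≤ η * (a * v + a' * v') := by nlinarith
  · calc a * v' ≤ a' * v' := mul_le_mul_of_nonneg_right haa' hv'
      _ ≤ η * (a * v + a' * v') := by nlinarith

theorem sum_mul_sum_le_two_mul_card_mul_sum_mul {ι : Type*} [Fintype ι] {a v : ι → ℝ} {η : ℝ}
    (ha : ∀ i, 0 ≤ a i) (hv : ∀ i, 0 ≤ v i) (hη : 1 ≤ η)
    (h : ∀ i j, a j ≤ a i → v j ≤ η * v i) :
    (∑ i, a i) * ∑ j, v j ≤ 2 * Fintype.card ι * η * ∑ i, a i * v i := by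
  calc (∑ i, a i) * ∑ j, v j = ∑ i, ∑ j, a i * v j := sum_mul_sum _ _ _ _
    _ ≤ ∑ i, ∑ j, η * (a i * v i + a j * v j) := sum_le_sum fun i _ => sum_le_sum fun j _ =>
        mul_le_mul_add_mul_of_le_imp (ha i) (ha j) (hv i) (hv j) hη (h i j)
    _ = 2 * Fintype.card ι * η * ∑ i, a i * v i := by
        simp only [mul_add, sum_add_distrib, sum_const, card_univ, nsmul_eq_mul, ← mul_sum]
        ring

/-- Let `B_1, ..., B_m` be disjoint buckets covered by disjoint
clusters `S_1, ..., S_k`.  If (i) `vol(B_t ∩ S_j) ≤ η vol(B_t ∩ S_i)` whenever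
`|B_t ∩ S_j| ≤ |B_t ∩ S_i|`, and (ii) `vol(B_t ∩ S_i) ≤ c vol(S_i)` for all
`t, i`, then `∑_t |B_t| vol(B_t) ≤ 2 k η c ∑_i |S_i| vol(S_i)`. -/
theorem sum_bucket_card_vol_le
    {V : Type*} [DecidableEq V]
    (m k : ℕ)
    (B : Fin m → Finset V) (S : Fin k → Finset V) (d : V → ℝ)
    (hd : ∀ v, 0 < d v)
    (hBdisj : ∀ t t', t ≠ t' → Disjoint (B t) (B t'))
    (hSdisj : ∀ i j, i ≠ j → Disjoint (S i) (S j))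
    (hcover : ∀ t, ∀ v ∈ B t, ∃ i, v ∈ S i)
    (η c : ℝ) (hη : 1 ≤ η) (hc : 0 < c)
    (h1 : ∀ t i j, (B t ∩ S j).card ≤ (B t ∩ S i).card →
        volsum d (B t ∩ S j) ≤ η * volsum d (B t ∩ S i))
    (h2 : ∀ t i, volsum d (B t ∩ S i) ≤ c * volsum d (S i)) :
    ∑ t, ((B t).card : ℝ) * volsum d (B t)
      ≤ 2 * k * η * c * ∑ i, ((S i).card : ℝ) * volsum d (S i) := by
  have hd' : ∀ v, 0 ≤ d v := fun v => (hd v).le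
  calc ∑ t, (#(B t) : ℝ) * volsum d (B t)
      = ∑ t, (∑ i, (#(B t ∩ S i) : ℝ)) * ∑ i, volsum d (B t ∩ S i) := by
        refine sum_congr rfl fun t _ => ?_
        rw [card_eq_sum_card_inter hSdisj (hcover t),
          volsum_eq_sum_volsum_inter hSdisj (hcover t), Nat.cast_sum]
    _ ≤ ∑ t, 2 * k * η * ∑ i, (#(B t ∩ S i) : ℝ) * volsum d (B t ∩ S i) := by
        refine sum_le_sum fun t _ => ?_
        simpa only [Fintype.card_fin] using sum_mul_sum_le_two_mul_card_mul_sum_mul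
          (fun i => Nat.cast_nonneg _) (fun i => volsum_nonneg hd' _) hη
          fun i j hij => h1 t i j (by exact_mod_cast hij)
    _ = 2 * k * η * ∑ i, ∑ t, (#(B t ∩ S i) : ℝ) * volsum d (B t ∩ S i) := by
        rw [← mul_sum, sum_comm]
    _ ≤ 2 * k * η * ∑ i, c * (#(S i) * volsum d (S i)) := by
        gcongr with i
        exact sum_card_inter_mul_volsum_inter_le hd' hBdisj hc.le fun t => h2 t i
    _ = 2 * k * η * c * ∑ i, (#(S i) : ℝ) * volsum d (S i) := by
        rw [← mul_sum]
        ring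
end

section
/- Let G be a graph with conductance Φ_G and let T be any HC tree of G with dense branch (A_0, ..., A_k), where A_0 is the root and each A_i satisfies vol(A_i) > vol(G)/2, with B_i the sibling of A_i. Then COST_G(T) ≥ (Φ_G/2) * sum_{i=1}^{k} |A_{i-1}| * vol(B_i), and also COST_G(T) ≥ (Φ_G/2) * |A_k| * vol(A_k). -/
open Finset

variable {V : Type*} [Fintype V] [DecidableEq V]

/-! Each sibling `B_{i+1}` of the dense branch, and each child of `A_k`, has volume at most
`vol(G)/2`, so by conductance at least `Φ · vol` of its weight leaves it. An edge leaving a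
child `C` of a node `N` is separated at `N` or above it, and `lcaSize` only grows towards the
root, so each such edge costs at least `|N|`. The siblings `B_1, …, B_k` are pairwise disjoint,
as are the two children of `A_k`, and summing over ordered pairs counts every edge twice. -/

namespace HCTree

variable {α : Type*}

def SplitsInto (t a b : HCTree α) : Prop := t = node a b ∨ t = node b a

def IsChild (c t : HCTree α) : Prop := ∃ d, t.SplitsInto c d

abbrev IsSubtree : HCTree α → HCTree α → Prop := Relation.ReflTransGen IsChild

theorem SplitsInto.symm {t a b : HCTree α} (h : t.SplitsInto a b) : t.SplitsInto b a :=
  Or.symm h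

theorem SplitsInto.nodup {t a b : HCTree α} (h : t.SplitsInto a b) (ht : t.leavesList.Nodup) :
    a.leavesList.Nodup := by
  rcases h with rfl | rfl
  · exact (List.nodup_append.mp ht).1
  · exact (List.nodup_append.mp ht).2.1

theorem IsSubtree.nodup {s t : HCTree α} (h : IsSubtree s t) (ht : t.leavesList.Nodup) :
    s.leavesList.Nodup := by
  induction h with
  | refl => exact ht
  | tail _ hbc ih => exact ih (hbc.choose_spec.nodup ht)

theorem isSubtree_of_chain {A : ℕ → HCTree α} {k : ℕ} (hA : ∀ i < k, IsChild (A (i + 1)) (A i))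
    {i j : ℕ} (hij : i ≤ j) (hjk : j ≤ k) : IsSubtree (A j) (A i) := by
  induction j, hij using Nat.le_induction with
  | base => exact .refl
  | succ j _ ih => exact .head (hA j hjk) (ih (by omega))

variable [DecidableEq α]

theorem leaves_eq_toFinset (t : HCTree α) : t.leaves = t.leavesList.toFinset := by
  induction t with
  | leaf v => simp [leaves, leavesList]
  | node l r ihl ihr => simp [leaves, leavesList, ihl, ihr]

theorem SplitsInto.leaves_eq {t a b : HCTree α} (h : t.SplitsInto a b) :
    t.leaves = a.leaves ∪ b.leaves := by
  rcases h with rfl | rfl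
  · rfl
  · exact Finset.union_comm _ _

theorem SplitsInto.disjoint {t a b : HCTree α} (h : t.SplitsInto a b) (ht : t.leavesList.Nodup) :
    Disjoint a.leaves b.leaves := by
  rw [leaves_eq_toFinset, leaves_eq_toFinset, List.disjoint_toFinset_iff_disjoint]
  rcases h with rfl | rfl
  · exact (List.nodup_append'.mp ht).2.2
  · exact (List.nodup_append'.mp ht).2.2.symm

theorem IsSubtree.leaves_subset {s t : HCTree α} (h : IsSubtree s t) : s.leaves ⊆ t.leaves := by
  induction h with
  | refl => exact subset_rfl
  | tail _ hbc ih => exact ih.trans (hbc.choose_spec.leaves_eq ▸ subset_union_left)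

theorem lcaSize_le_card (t : HCTree α) (u v : α) : t.lcaSize u v ≤ t.leaves.card := by
  induction t with
  | leaf => simp [lcaSize, leaves]
  | node l r ihl ihr =>
    simp only [lcaSize, leaves]
    split_ifs
    · exact ihl.trans (card_le_card subset_union_left)
    · exact ihr.trans (card_le_card subset_union_right)
    · exact le_rfl

theorem SplitsInto.lcaSize_eq {t a b : HCTree α} (h : t.SplitsInto a b) (ht : t.leavesList.Nodup)
    {u v : α} (hu : u ∈ a.leaves) (hv : v ∈ a.leaves) : t.lcaSize u v = a.lcaSize u v := by
  have hub : u ∉ b.leaves := disjoint_left.mp (h.disjoint ht) hu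
  rcases h with rfl | rfl <;> simp [lcaSize, hu, hv, hub]

theorem SplitsInto.lcaSize_eq_card {t a b : HCTree α} (h : t.SplitsInto a b)
    (ht : t.leavesList.Nodup) {u v : α} (hu : u ∈ a.leaves) (hv : v ∉ a.leaves) :
    t.lcaSize u v = t.leaves.card := by
  have hub : u ∉ b.leaves := disjoint_left.mp (h.disjoint ht) hu
  rcases h with rfl | rfl <;> simp [lcaSize, leaves, hv, hub]

theorem IsChild.lcaSize_le {c t : HCTree α} (h : IsChild c t) (ht : t.leavesList.Nodup)
    {u : α} (hu : u ∈ c.leaves) (v : α) : c.lcaSize u v ≤ t.lcaSize u v := by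
  obtain ⟨d, hs⟩ := h
  by_cases hv : v ∈ c.leaves
  · exact (hs.lcaSize_eq ht hu hv).ge
  · rw [hs.lcaSize_eq_card ht hu hv]
    exact (lcaSize_le_card c u v).trans (card_le_card (hs.leaves_eq ▸ subset_union_left))

theorem IsSubtree.lcaSize_le {s t : HCTree α} (h : IsSubtree s t) (ht : t.leavesList.Nodup)
    {u : α} (hu : u ∈ s.leaves) (v : α) : s.lcaSize u v ≤ t.lcaSize u v := by
  induction h with
  | refl => exact le_rfl
  | tail hsb hbc ih =>
    exact (ih (hbc.choose_spec.nodup ht)).trans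
      (hbc.lcaSize_le ht (IsSubtree.leaves_subset hsb hu) v)

theorem SplitsInto.card_le_lcaSize {n c d t : HCTree α} (hn : n.SplitsInto c d)
    (hsub : IsSubtree n t) (ht : t.leavesList.Nodup) {u v : α} (hu : u ∈ c.leaves)
    (hv : v ∉ c.leaves) : n.leaves.card ≤ t.lcaSize u v := by
  have hmono := hsub.lcaSize_le ht (hn.leaves_eq ▸ mem_union_left _ hu) v
  rwa [hn.lcaSize_eq_card (hsub.nodup ht) hu hv] at hmono

theorem pairwiseDisjoint_siblings {A B : ℕ → HCTree α} {k : ℕ}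
    (hchild : ∀ i < k, (A i).SplitsInto (A (i + 1)) (B (i + 1)))
    (hnodup : (A 0).leavesList.Nodup) :
    (range k : Set ℕ).PairwiseDisjoint fun i => (B (i + 1)).leaves := by
  have hsub {i j : ℕ} (hij : i ≤ j) (hjk : j ≤ k) : IsSubtree (A j) (A i) :=
    isSubtree_of_chain (fun i hi => ⟨B (i + 1), hchild i hi⟩) hij hjk
  have hlt {i j : ℕ} (hij : i < j) (hjk : j < k) :
      Disjoint (B (i + 1)).leaves (B (j + 1)).leaves := by
    have hBA : (B (j + 1)).leaves ⊆ (A (i + 1)).leaves :=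
      (hchild j hjk).leaves_eq ▸ subset_union_right |>.trans (hsub hij hjk.le).leaves_subset
    exact ((hchild i (hij.trans hjk)).disjoint ((hsub (Nat.zero_le i) (by omega)).nodup hnodup)
      |>.mono_left hBA).symm
  intro i hi j hj hij
  simp only [coe_range, Set.mem_Iio] at hi hj
  rcases lt_or_gt_of_ne hij with h | h
  · exact hlt h hj
  · exact (hlt h hi).symm

end HCTree

open HCTree

theorem volw_le_volw {W : Type*} [Fintype W] {w : W → W → ℝ} (hw : ∀ u v, 0 ≤ w u v)
    {S T : Finset W} (h : S ⊆ T) :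
    volw w S ≤ volw w T :=
  sum_le_sum_of_subset_of_nonneg h fun u _ _ => sum_nonneg fun v _ => hw u v

theorem HCTree.SplitsInto.volw_eq (w : V → V → ℝ) {t a b : HCTree V} (h : t.SplitsInto a b)
    (ht : t.leavesList.Nodup) : volw w t.leaves = volw w a.leaves + volw w b.leaves := by
  rw [volw, h.leaves_eq, sum_union (h.disjoint ht)]
  rfl

theorem HCTree.SplitsInto.volw_le_half {w : V → V → ℝ} (hw : ∀ u v, 0 ≤ w u v)
    {t a b : HCTree V} (h : t.SplitsInto a b) (ht : t.leavesList.Nodup)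
    (ha : volw w univ / 2 < volw w a.leaves) : volw w b.leaves ≤ volw w univ / 2 := by
  linarith [h.volw_eq w ht, volw_le_volw hw (subset_univ t.leaves)]

theorem sum_mul_lcaSize_le_two_mul_dasguptaCost {w : V → V → ℝ} (hw : ∀ u v, 0 ≤ w u v)
    (T : HCTree V) (S : Finset V) :
    ∑ u ∈ S, ∑ v, w u v * (T.lcaSize u v : ℝ) ≤ 2 * dasguptaCost w T := by
  rw [dasguptaCost, mul_div_cancel₀ _ two_ne_zero]
  exact sum_le_sum_of_subset_of_nonneg (subset_univ S) fun u _ _ =>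
    sum_nonneg fun v _ => mul_nonneg (hw u v) (Nat.cast_nonneg _)

theorem mul_cutw_le_sum_mul_lcaSize {w : V → V → ℝ} (hw : ∀ u v, 0 ≤ w u v) {T : HCTree V}
    {S : Finset V} {c : ℕ} (hc : ∀ u ∈ S, ∀ v ∉ S, c ≤ T.lcaSize u v) :
    c * cutw w S Sᶜ ≤ ∑ u ∈ S, ∑ v, w u v * (T.lcaSize u v : ℝ) := by
  calc (c : ℝ) * cutw w S Sᶜ = ∑ u ∈ S, ∑ v ∈ Sᶜ, w u v * c := by
        rw [cutw, mul_comm]; simp only [sum_mul]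
    _ ≤ ∑ u ∈ S, ∑ v ∈ Sᶜ, w u v * (T.lcaSize u v : ℝ) := by
        gcongr with u hu v hv
        · exact hw u v
        · exact_mod_cast hc u hu v (mem_compl.mp hv)
    _ ≤ ∑ u ∈ S, ∑ v, w u v * (T.lcaSize u v : ℝ) :=
        sum_le_sum fun u _ => sum_le_sum_of_subset_of_nonneg (subset_univ _) fun v _ _ =>
          mul_nonneg (hw u v) (Nat.cast_nonneg _)

theorem HCTree.SplitsInto.mul_volw_le_sum_mul_lcaSize {w : V → V → ℝ} (hw : ∀ u v, 0 ≤ w u v)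
    {Φ : ℝ} {n c d T : HCTree V} (hn : n.SplitsInto c d) (hsub : IsSubtree n T)
    (hT : T.leavesList.Nodup) (hΦ : Φ * volw w c.leaves ≤ cutw w c.leaves c.leavesᶜ) :
    Φ * n.leaves.card * volw w c.leaves ≤ ∑ u ∈ c.leaves, ∑ v, w u v * (T.lcaSize u v : ℝ) :=
  calc Φ * n.leaves.card * volw w c.leaves = n.leaves.card * (Φ * volw w c.leaves) := by ring
    _ ≤ n.leaves.card * cutw w c.leaves c.leavesᶜ := by gcongr
    _ ≤ _ := mul_cutw_le_sum_mul_lcaSize hw fun _ hu _ hv => hn.card_le_lcaSize hsub hT hu hv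

theorem dense_branch_cost_lower_bound_general
    (w : V → V → ℝ)
    (hnonneg : ∀ u v, 0 ≤ w u v)
    (Φ : ℝ)
    (hΦ : ∀ A : Finset V, volw w A ≤ volw w Finset.univ / 2 →
        Φ * volw w A ≤ cutw w A Aᶜ)
    (T : HCTree V)
    (hnodup : T.leavesList.Nodup)
    (k : ℕ)
    (A B : ℕ → HCTree V)
    (hA0 : A 0 = T)
    (hchild : ∀ i < k,
      A i = .node (A (i + 1)) (B (i + 1)) ∨ A i = .node (B (i + 1)) (A (i + 1)))
    (hdense : ∀ i ≤ k, volw w Finset.univ / 2 < volw w (A i).leaves)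
    (hlast : ∃ L R : HCTree V, A k = .node L R ∧
      volw w L.leaves ≤ volw w Finset.univ / 2 ∧
      volw w R.leaves ≤ volw w Finset.univ / 2) :
    Φ / 2 * ∑ i ∈ Finset.range k,
        ((A i).leaves.card : ℝ) * volw w (B (i + 1)).leaves
      ≤ dasguptaCost w T
    ∧ Φ / 2 * ((A k).leaves.card : ℝ) * volw w (A k).leaves
      ≤ dasguptaCost w T := by
  subst hA0
  have hsplit (i : ℕ) (hi : i < k) : (A i).SplitsInto (A (i + 1)) (B (i + 1)) := hchild i hi
  have hsub {i : ℕ} (hi : i ≤ k) : IsSubtree (A i) (A 0) :=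
    isSubtree_of_chain (fun j hj => ⟨B (j + 1), hchild j hj⟩) (Nat.zero_le i) hi
  have hcost (S : Finset V) :
      (∑ u ∈ S, ∑ v, w u v * ((A 0).lcaSize u v : ℝ)) / 2 ≤ dasguptaCost w (A 0) := by
    linarith [sum_mul_lcaSize_le_two_mul_dasguptaCost hnonneg (A 0) S]
  constructor
  · calc Φ / 2 * ∑ i ∈ range k, ((A i).leaves.card : ℝ) * volw w (B (i + 1)).leaves
        = (∑ i ∈ range k, Φ * (A i).leaves.card * volw w (B (i + 1)).leaves) / 2 := by
          rw [mul_sum, sum_div]; congr! 1 with i; ring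
      _ ≤ (∑ i ∈ range k, ∑ u ∈ (B (i + 1)).leaves,
            ∑ v, w u v * ((A 0).lcaSize u v : ℝ)) / 2 := by
          gcongr with i hi
          have hik := mem_range.mp hi
          exact (hsplit i hik).symm.mul_volw_le_sum_mul_lcaSize hnonneg (hsub hik.le) hnodup
            (hΦ _ ((hsplit i hik).volw_le_half hnonneg ((hsub hik.le).nodup hnodup) (hdense _ hik)))
      _ ≤ dasguptaCost w (A 0) := by
          rw [← sum_biUnion (pairwiseDisjoint_siblings hsplit hnodup)]; exact hcost _
  · obtain ⟨L, R, hAk, hL, hR⟩ := hlast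
    have hLR : (A k).SplitsInto L R := .inl hAk
    have hAk_nodup := (hsub le_rfl).nodup hnodup
    calc Φ / 2 * ((A k).leaves.card : ℝ) * volw w (A k).leaves
        = (Φ * (A k).leaves.card * volw w L.leaves
            + Φ * (A k).leaves.card * volw w R.leaves) / 2 := by
          rw [hLR.volw_eq w hAk_nodup]; ring
      _ ≤ (∑ u ∈ L.leaves, ∑ v, w u v * ((A 0).lcaSize u v : ℝ)
            + ∑ u ∈ R.leaves, ∑ v, w u v * ((A 0).lcaSize u v : ℝ)) / 2 := by
          gcongr
          · exact hLR.mul_volw_le_sum_mul_lcaSize hnonneg (hsub le_rfl) hnodup (hΦ _ hL)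
          · exact hLR.symm.mul_volw_le_sum_mul_lcaSize hnonneg (hsub le_rfl) hnodup (hΦ _ hR)
      _ ≤ dasguptaCost w (A 0) := by
          rw [← sum_union (hLR.disjoint hAk_nodup), ← hLR.leaves_eq]; exact hcost _

/-- Lower bound on `COST_G(T)` from the dense branch
`(A_0, ..., A_k)` of `T` (each `A_i` of volume `> vol(G)/2`, `A_{i+1}` a child
of `A_i` with sibling `B_{i+1}`, `A_k` having both children of volume
`≤ vol(G)/2`), where `Φ` is a lower bound on the conductance of `G`:
`COST_G(T) ≥ (Φ/2) ∑_{i=1}^k |A_{i-1}| vol(B_i)` and also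
`COST_G(T) ≥ (Φ/2) |A_k| vol(A_k)`. -/
theorem dense_branch_cost_lower_bound
    (w : V → V → ℝ)
    (hsymm : ∀ u v, w u v = w v u)
    (hnonneg : ∀ u v, 0 ≤ w u v)
    (hself : ∀ u, w u u = 0)
    (Φ : ℝ) (hΦ0 : 0 ≤ Φ)
    (hΦ : ∀ A : Finset V, volw w A ≤ volw w Finset.univ / 2 →
        Φ * volw w A ≤ cutw w A Aᶜ)
    (T : HCTree V)
    (hleaves : T.leaves = Finset.univ)
    (hnodup : T.leavesList.Nodup)
    (k : ℕ)
    (A B : ℕ → HCTree V)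
    (hA0 : A 0 = T)
    (hchild : ∀ i < k,
      A i = .node (A (i + 1)) (B (i + 1)) ∨ A i = .node (B (i + 1)) (A (i + 1)))
    (hdense : ∀ i ≤ k, volw w Finset.univ / 2 < volw w (A i).leaves)
    (hlast : ∃ L R : HCTree V, A k = .node L R ∧
      volw w L.leaves ≤ volw w Finset.univ / 2 ∧
      volw w R.leaves ≤ volw w Finset.univ / 2) :
    Φ / 2 * ∑ i ∈ Finset.range k,
        ((A i).leaves.card : ℝ) * volw w (B (i + 1)).leaves
      ≤ dasguptaCost w T
    ∧ Φ / 2 * ((A k).leaves.card : ℝ) * volw w (A k).leaves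
      ≤ dasguptaCost w T :=
  dense_branch_cost_lower_bound_general w hnonneg Φ hΦ T hnodup k A B hA0 hchild hdense hlast
end

section
/- Let G be a graph with a partition into clusters S_1, ..., S_k with |S_1| ≥ |S_2| ≥ ... ≥ |S_k|, and suppose each Φ_G(S_i) ≤ ρ. Construct the caterpillar tree T_S by placing arbitrary HC trees of G[S_i] in order of decreasing size along the spine, so that the lowest common ancestor of a vertex of S_i and a vertex of S_j for i < j has exactly n - |S_1| - ... - |S_{i-1}| leaves. Then the total Dasgupta cost of edges crossing distinct clusters in T_S is at most k * ρ * sum_{i=1}^k |S_i| * vol(S_i). -/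
/-- `spine sub m i` is the caterpillar tree whose spine carries the subtrees
`sub i, sub (i+1), ..., sub (i+m)`, with `sub i` attached at the top. -/
def spine {V : Type*} (sub : ℕ → HCTree V) : ℕ → ℕ → HCTree V
  | 0, i => sub i
  | m + 1, i => .node (sub i) (spine sub m (i + 1))

open Finset

variable {V : Type*} [Fintype V] [DecidableEq V]

lemma spine_leaves_aux (S : ℕ → Finset V) (k : ℕ) (sub : ℕ → HCTree V)
    (hsub : ∀ i < k, (sub i).leaves = S i) :
    ∀ m i, i + m < k → (spine sub m i).leaves = (Finset.Icc i (i + m)).biUnion S := by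
  intro m
  induction m with
  | zero =>
    intro i hi
    simp [spine, hsub i (by omega)]
  | succ m ih =>
    intro i hi
    have h1 : (spine sub (m + 1) i).leaves
        = (sub i).leaves ∪ (spine sub m (i + 1)).leaves := rfl
    rw [h1, hsub i (by omega), ih (i + 1) (by omega)]
    ext x
    simp only [Finset.mem_union, Finset.mem_biUnion, Finset.mem_Icc]
    constructor
    · rintro (h | ⟨t, ⟨ht1, ht2⟩, ht3⟩)
      · exact ⟨i, ⟨le_refl _, by omega⟩, h⟩
      · exact ⟨t, ⟨by omega, by omega⟩, ht3⟩
    · rintro ⟨t, ⟨ht1, ht2⟩, ht3⟩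
      rcases eq_or_lt_of_le ht1 with rfl | hlt
      · exact Or.inl ht3
      · exact Or.inr ⟨t, ⟨by omega, by omega⟩, ht3⟩

lemma spine_lcaSize_aux (S : ℕ → Finset V) (k : ℕ) (sub : ℕ → HCTree V)
    (hsub : ∀ i < k, (sub i).leaves = S i)
    (hdisj : ∀ a b, a < b → b < k → Disjoint (S a) (S b)) :
    ∀ m i i' j' u v, i + m < k → i ≤ i' → i' < j' → j' ≤ i + m →
      u ∈ S i' → v ∈ S j' →
      (spine sub m i).lcaSize u v = ((Finset.Icc i' (i + m)).biUnion S).card := by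
  intro m
  induction m with
  | zero => intro i i' j' u v _ h1 h2 h3 _ _; omega
  | succ m ih =>
    intro i i' j' u v hkm h1 h2 h3 hu hv
    have hleft : (sub i).leaves = S i := hsub i (by omega)
    have hright : (spine sub m (i + 1)).leaves
        = (Finset.Icc (i + 1) (i + 1 + m)).biUnion S :=
      spine_leaves_aux S k sub hsub m (i + 1) (by omega)
    have hspine : spine sub (m + 1) i = .node (sub i) (spine sub m (i + 1)) := rfl
    have hvnotleft : v ∉ (sub i).leaves := by
      rw [hleft]
      intro h
      exact Finset.disjoint_left.mp (hdisj i j' (by omega) (by omega)) h hv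
    rw [hspine]
    show (if u ∈ (sub i).leaves ∧ v ∈ (sub i).leaves then (sub i).lcaSize u v
      else if u ∈ (spine sub m (i+1)).leaves ∧ v ∈ (spine sub m (i+1)).leaves
        then (spine sub m (i+1)).lcaSize u v
      else ((sub i).leaves ∪ (spine sub m (i+1)).leaves).card) = _
    rcases eq_or_lt_of_le h1 with rfl | hlt
    · -- i' = i
      have hunotright : u ∉ (spine sub m (i + 1)).leaves := by
        rw [hright]
        intro h
        rw [Finset.mem_biUnion] at h
        obtain ⟨t, ht, hmem⟩ := h
        rw [Finset.mem_Icc] at ht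
        exact Finset.disjoint_left.mp (hdisj i t (by omega) (by omega)) hu hmem
      rw [if_neg (fun h => hvnotleft h.2), if_neg (fun h => hunotright h.1)]
      have : (sub i).leaves ∪ (spine sub m (i + 1)).leaves
          = (spine sub (m + 1) i).leaves := rfl
      rw [this, spine_leaves_aux S k sub hsub (m + 1) i (by omega)]
    · -- i < i'
      have hunotleft : u ∉ (sub i).leaves := by
        rw [hleft]
        intro h
        exact Finset.disjoint_left.mp (hdisj i i' hlt (by omega)) h hu
      have huright : u ∈ (spine sub m (i + 1)).leaves := by
        rw [hright, Finset.mem_biUnion]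
        exact ⟨i', Finset.mem_Icc.mpr ⟨by omega, by omega⟩, hu⟩
      have hvright : v ∈ (spine sub m (i + 1)).leaves := by
        rw [hright, Finset.mem_biUnion]
        exact ⟨j', Finset.mem_Icc.mpr ⟨by omega, by omega⟩, hv⟩
      rw [if_neg (fun h => hunotleft h.1), if_pos ⟨huright, hvright⟩,
        ih (i + 1) i' j' u v (by omega) (by omega) h2 (by omega) hu hv,
        show i + 1 + m = i + (m + 1) from by omega]

/-- Let `S 0, ..., S (k-1)` partition `V` with
`|S 0| ≥ |S 1| ≥ ... ≥ |S (k-1)|` and `Φ_G(S i) ≤ ρ` for all `i`.  Build the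
caterpillar tree `T_S` placing arbitrary HC trees of the `G[S i]` in order of
decreasing size along the spine.  Then the total Dasgupta cost in `T_S` of the
edges crossing distinct clusters is at most `k ρ ∑_i |S i| vol(S i)`. -/
theorem caterpillar_crossing_cost_le
    (w : V → V → ℝ)
    (hsymm : ∀ u v, w u v = w v u)
    (hnonneg : ∀ u v, 0 ≤ w u v)
    (k : ℕ) (hk : 0 < k)
    (S : ℕ → Finset V)
    (hdisj : ∀ a b, a < b → b < k → Disjoint (S a) (S b))
    (hcover : ∀ v : V, ∃ i, i < k ∧ v ∈ S i)
    (hsize : ∀ a b, a ≤ b → b < k → (S b).card ≤ (S a).card)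
    (ρ : ℝ) (hρ : 0 ≤ ρ)
    (hcond : ∀ i < k, cutw w (S i) (S i)ᶜ ≤ ρ * volw w (S i))
    (sub : ℕ → HCTree V)
    (hsub : ∀ i < k, (sub i).leaves = S i) :
    ∑ i ∈ Finset.range k, ∑ j ∈ (Finset.range k).filter (fun j => i < j),
        ∑ u ∈ S i, ∑ v ∈ S j,
          w u v * (((spine sub (k - 1) 0).lcaSize u v : ℕ) : ℝ)
      ≤ (k : ℝ) * ρ * ∑ i ∈ Finset.range k, ((S i).card : ℝ) * volw w (S i) := by
  classical
  -- Step 1: bound the lca size for a crossing pair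
  have hlca : ∀ i j, i < j → j < k → ∀ u ∈ S i, ∀ v ∈ S j,
      (((spine sub (k - 1) 0).lcaSize u v : ℕ) : ℝ) ≤ (k : ℝ) * (S i).card := by
    intro i j hij hjk u hu v hv
    have heq := spine_lcaSize_aux S k sub hsub hdisj (k - 1) 0 i j u v
      (by omega) (by omega) hij (by omega) hu hv
    rw [heq]
    have hnat : ((Finset.Icc i (0 + (k - 1))).biUnion S).card ≤ k * (S i).card := by
      calc ((Finset.Icc i (0 + (k - 1))).biUnion S).card
          ≤ ∑ t ∈ Finset.Icc i (0 + (k - 1)), (S t).card := Finset.card_biUnion_le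
        _ ≤ ∑ _t ∈ Finset.Icc i (0 + (k - 1)), (S i).card := by
            apply Finset.sum_le_sum
            intro t ht
            rw [Finset.mem_Icc] at ht
            exact hsize i t ht.1 (by omega)
        _ = (Finset.Icc i (0 + (k - 1))).card * (S i).card := by
            rw [Finset.sum_const, smul_eq_mul]
        _ ≤ k * (S i).card := by
            apply Nat.mul_le_mul_right
            rw [Nat.card_Icc]
            omega
    calc (((Finset.Icc i (0 + (k - 1))).biUnion S).card : ℝ)
        ≤ ((k * (S i).card : ℕ) : ℝ) := by exact_mod_cast hnat
      _ = (k : ℝ) * (S i).card := by push_cast; ring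
  -- Step 2: per-cluster bound
  have hstep : ∀ i ∈ Finset.range k,
      ∑ j ∈ (Finset.range k).filter (fun j => i < j),
        ∑ u ∈ S i, ∑ v ∈ S j,
          w u v * (((spine sub (k - 1) 0).lcaSize u v : ℕ) : ℝ)
      ≤ (k : ℝ) * (S i).card * (ρ * volw w (S i)) := by
    intro i hi
    rw [Finset.mem_range] at hi
    have step1 : ∑ j ∈ (Finset.range k).filter (fun j => i < j),
        ∑ u ∈ S i, ∑ v ∈ S j,
          w u v * (((spine sub (k - 1) 0).lcaSize u v : ℕ) : ℝ)
        ≤ (k : ℝ) * (S i).card *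
            ∑ j ∈ (Finset.range k).filter (fun j => i < j),
              ∑ u ∈ S i, ∑ v ∈ S j, w u v := by
      rw [Finset.mul_sum]
      apply Finset.sum_le_sum
      intro j hj
      rw [Finset.mem_filter, Finset.mem_range] at hj
      rw [Finset.mul_sum]
      apply Finset.sum_le_sum
      intro u hu
      rw [Finset.mul_sum]
      apply Finset.sum_le_sum
      intro v hv
      calc w u v * (((spine sub (k - 1) 0).lcaSize u v : ℕ) : ℝ)
          ≤ w u v * ((k : ℝ) * (S i).card) := by
            apply mul_le_mul_of_nonneg_left _ (hnonneg u v)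
            exact hlca i j hj.2 hj.1 u hu v hv
        _ = (k : ℝ) * (S i).card * w u v := by ring
    have step2 : ∑ j ∈ (Finset.range k).filter (fun j => i < j),
        ∑ u ∈ S i, ∑ v ∈ S j, w u v ≤ cutw w (S i) (S i)ᶜ := by
      rw [Finset.sum_comm]
      unfold cutw
      apply Finset.sum_le_sum
      intro u hu
      have hpd : ((Finset.range k).filter (fun j => i < j) : Set ℕ).PairwiseDisjoint S := by
        intro a ha b hb hab
        simp only [Finset.coe_filter, Set.mem_setOf_eq, Finset.mem_range] at ha hb
        rcases lt_trichotomy a b with h | h | h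
        · exact hdisj a b h hb.1
        · exact absurd h hab
        · exact (hdisj b a h ha.1).symm
      rw [← Finset.sum_biUnion hpd]
      apply Finset.sum_le_sum_of_subset_of_nonneg
      · intro v hv
        rw [Finset.mem_biUnion] at hv
        obtain ⟨j, hj, hvj⟩ := hv
        rw [Finset.mem_filter, Finset.mem_range] at hj
        rw [Finset.mem_compl]
        intro hvi
        exact Finset.disjoint_left.mp (hdisj i j hj.2 hj.1) hvi hvj
      · intro v _ _
        exact hnonneg u v
    calc ∑ j ∈ (Finset.range k).filter (fun j => i < j),
        ∑ u ∈ S i, ∑ v ∈ S j,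
          w u v * (((spine sub (k - 1) 0).lcaSize u v : ℕ) : ℝ)
        ≤ (k : ℝ) * (S i).card *
            ∑ j ∈ (Finset.range k).filter (fun j => i < j),
              ∑ u ∈ S i, ∑ v ∈ S j, w u v := step1
      _ ≤ (k : ℝ) * (S i).card * cutw w (S i) (S i)ᶜ := by
          apply mul_le_mul_of_nonneg_left step2
          positivity
      _ ≤ (k : ℝ) * (S i).card * (ρ * volw w (S i)) := by
          apply mul_le_mul_of_nonneg_left (hcond i hi)
          positivity
  calc ∑ i ∈ Finset.range k, ∑ j ∈ (Finset.range k).filter (fun j => i < j),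
        ∑ u ∈ S i, ∑ v ∈ S j,
          w u v * (((spine sub (k - 1) 0).lcaSize u v : ℕ) : ℝ)
      ≤ ∑ i ∈ Finset.range k, (k : ℝ) * (S i).card * (ρ * volw w (S i)) :=
        Finset.sum_le_sum hstep
    _ = (k : ℝ) * ρ * ∑ i ∈ Finset.range k, ((S i).card : ℝ) * volw w (S i) := by
        rw [Finset.mul_sum]
        apply Finset.sum_congr rfl
        intro i _
        ring
end
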